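/- Barnum's proposed coherent-information rate-distortion function can be negative: let π = I₂/2 be the maximally mixed qubit state with purification the Bell state |Φ⟩ = (|00⟩+|11⟩)/√2, and let Λ be the completely depolarizing qubit channel Λ(X) = Tr[X]·I₂/2. Then the output state ω = (id ⊗ Λ)(|Φ⟩⟨Φ|) is the two-qubit maximally mixed state I₄/4, the distortion is d(π,Λ) = 1 − ⟨Φ|ω|Φ⟩ = 3/4, and the coherent information is I(A⟩B)_ω = −1. Consequently min{ I(A⟩B)_{(id⊗N)(|Φ⟩⟨Φ|)} : N CPTP on the qubit with d(π,N) ≤ 3/4 } ≤ −1 < 0. -/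

import Mathlib

open Matrix BigOperators Filter
open scoped Classical ComplexOrder

noncomputable section

namespace QIT

/-- A density matrix (quantum state). -/
def IsState {A : Type*} [Fintype A] (ρ : Matrix A A ℂ) : Prop :=
  ρ.PosSemidef ∧ ρ.trace = 1

/-- A probability distribution on a finite type. -/
def IsProbDist {U : Type*} [Fintype U] (p : U → ℝ) : Prop :=
  (∀ u, 0 ≤ p u) ∧ ∑ u, p u = 1

/-- The outer product `|ψ⟩⟨ψ|`. -/
def proj {A : Type*} (ψ : A → ℂ) : Matrix A A ℂ :=
  Matrix.of fun i j => ψ i * (starRingEnd ℂ) (ψ j)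

/-- A unit vector. -/
def IsUnitVec {A : Type*} [Fintype A] (ψ : A → ℂ) : Prop :=
  ∑ p, Complex.normSq (ψ p) = 1

/-- Extraction of an operator block of a bipartite operator. -/
def blockL {R A : Type*} (r r' : R) :
    Matrix (R × A) (R × A) ℂ →ₗ[ℂ] Matrix A A ℂ where
  toFun X := Matrix.of fun i j => X (r, i) (r', j)
  map_add' X Y := by ext i j; rfl
  map_smul' c X := by ext i j; rfl

/-- The map `id_R ⊗ N`. -/
def lTensor (R : Type*) {A B : Type*} (N : Matrix A A ℂ →ₗ[ℂ] Matrix B B ℂ) :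
    Matrix (R × A) (R × A) ℂ →ₗ[ℂ] Matrix (R × B) (R × B) ℂ where
  toFun X := Matrix.of fun p q => N (blockL p.1 q.1 X) p.2 q.2
  map_add' X Y := by ext p q; simp [Matrix.of_apply, map_add, Matrix.add_apply]
  map_smul' c X := by ext p q; simp [Matrix.of_apply, _root_.map_smul, Matrix.smul_apply]

/-- Extraction of an operator block (right version). -/
def blockR {A T : Type*} (t t' : T) :
    Matrix (A × T) (A × T) ℂ →ₗ[ℂ] Matrix A A ℂ where
  toFun X := Matrix.of fun i j => X (i, t) (j, t')
  map_add' X Y := by ext i j; rfl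
  map_smul' c X := by ext i j; rfl

/-- The map `N ⊗ id_T`. -/
def rTensor (T : Type*) {A B : Type*} (N : Matrix A A ℂ →ₗ[ℂ] Matrix B B ℂ) :
    Matrix (A × T) (A × T) ℂ →ₗ[ℂ] Matrix (B × T) (B × T) ℂ where
  toFun X := Matrix.of fun p q => N (blockR p.2 q.2 X) p.1 q.1
  map_add' X Y := by ext p q; simp [Matrix.of_apply, map_add, Matrix.add_apply]
  map_smul' c X := by ext p q; simp [Matrix.of_apply, _root_.map_smul, Matrix.smul_apply]

/-- Partial trace over the first (left) factor. -/
def ptraceLeft {R A : Type*} [Fintype R] (X : Matrix (R × A) (R × A) ℂ) : Matrix A A ℂ :=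
  Matrix.of fun i j => ∑ r, X (r, i) (r, j)

/-- Partial trace over the second (right) factor. -/
def ptraceRight {R A : Type*} [Fintype A] (X : Matrix (R × A) (R × A) ℂ) : Matrix R R ℂ :=
  Matrix.of fun i j => ∑ a, X (i, a) (j, a)

/-- The von Neumann entropy (base 2). -/
def entropy {A : Type*} [Fintype A] [DecidableEq A] (ρ : Matrix A A ℂ) : ℝ :=
  if h : ρ.IsHermitian then -∑ i, h.eigenvalues i * Real.logb 2 (h.eigenvalues i) else 0

/-- Quantum mutual information `I(X;Y) = H(X)+H(Y)-H(XY)` of a bipartite state. -/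
def mutualInfo {X Y : Type*} [Fintype X] [Fintype Y] [DecidableEq X] [DecidableEq Y]
    (ω : Matrix (X × Y) (X × Y) ℂ) : ℝ :=
  entropy (ptraceRight ω) + entropy (ptraceLeft ω) - entropy ω

/-- Coherent information `I(X⟩Y) = H(Y) - H(XY)` of a bipartite state. -/
def cohInfo {X Y : Type*} [Fintype X] [Fintype Y] [DecidableEq X] [DecidableEq Y]
    (ω : Matrix (X × Y) (X × Y) ℂ) : ℝ :=
  entropy (ptraceLeft ω) - entropy ω

/-- Completely positive trace preserving maps. -/
def IsCPTP {A B : Type*} [Fintype A] [Fintype B]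
    (N : Matrix A A ℂ →ₗ[ℂ] Matrix B B ℂ) : Prop :=
  (∀ X, (N X).trace = X.trace) ∧
  ∀ (k : ℕ) (X : Matrix (Fin k × A) (Fin k × A) ℂ), X.PosSemidef →
    (lTensor (Fin k) N X).PosSemidef

/-- The quadratic form `⟨ψ|M|ψ⟩` (real part). -/
def quadForm {A : Type*} [Fintype A] (ψ : A → ℂ) (M : Matrix A A ℂ) : ℝ :=
  (∑ p, ∑ q, (starRingEnd ℂ) (ψ p) * M p q * ψ q).re

/-- The entanglement fidelity `F_e(ρ,N) = ⟨ψ|(id⊗N)(|ψ⟩⟨ψ|)|ψ⟩` w.r.t. a purification `ψ`. -/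
def entFid {R A : Type*} [Fintype R] [Fintype A]
    (ψ : R × A → ℂ) (N : Matrix A A ℂ →ₗ[ℂ] Matrix A A ℂ) : ℝ :=
  quadForm ψ (lTensor R N (proj ψ))

/-- The distortion `d(ρ,N) = 1 - F_e(ρ,N)`. -/
def distortion {R A : Type*} [Fintype R] [Fintype A]
    (ψ : R × A → ℂ) (N : Matrix A A ℂ →ₗ[ℂ] Matrix A A ℂ) : ℝ :=
  1 - entFid ψ N

/-- `ψ` is a purification of `ρ` (reference system on the left). -/
def IsPurification {R A : Type*} [Fintype R] [Fintype A]
    (ψ : R × A → ℂ) (ρ : Matrix A A ℂ) : Prop :=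
  IsUnitVec ψ ∧ ptraceLeft (proj ψ) = ρ


/-- Tensor power of a vector on a bipartite system, grouped as `R^n × A^n`. -/
def vecPow {R A : Type*} (ψ : R × A → ℂ) (n : ℕ) : (Fin n → R) × (Fin n → A) → ℂ :=
  fun p => ∏ i, ψ (p.1 i, p.2 i)

/-- Tensor power of a matrix. -/
def matPow {A : Type*} (ρ : Matrix A A ℂ) (n : ℕ) :
    Matrix (Fin n → A) (Fin n → A) ℂ :=
  Matrix.of fun f g => ∏ i, ρ (f i) (g i)

/-- Tensor power of a bipartite matrix, grouped as `R^n × A^n`. -/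
def matPow2 {R A : Type*} (ω : Matrix (R × A) (R × A) ℂ) (n : ℕ) :
    Matrix ((Fin n → R) × (Fin n → A)) ((Fin n → R) × (Fin n → A)) ℂ :=
  Matrix.of fun p q => ∏ i, ω (p.1 i, p.2 i) (q.1 i, q.2 i)

/-- The linear map `σ ↦ ρ ⊗ ⋯ ⊗ σ ⊗ ⋯ ⊗ ρ` with `σ` inserted in the `i`-th slot. -/
def insertAt {A : Type*} [Fintype A] (ρ : Matrix A A ℂ) {n : ℕ} (i : Fin n) :
    Matrix A A ℂ →ₗ[ℂ] Matrix (Fin n → A) (Fin n → A) ℂ where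
  toFun σ := Matrix.of fun f g => σ (f i) (g i) * ∏ j ∈ Finset.univ.erase i, ρ (f j) (g j)
  map_add' σ τ := by ext f g; simp [Matrix.add_apply, add_mul]
  map_smul' c σ := by ext f g; simp [Matrix.smul_apply, smul_eq_mul, mul_assoc]

/-- Partial trace over all tensor factors except the `i`-th. -/
def ptraceExceptL {A : Type*} [Fintype A] [DecidableEq A] {n : ℕ} (i : Fin n) :
    Matrix (Fin n → A) (Fin n → A) ℂ →ₗ[ℂ] Matrix A A ℂ where
  toFun X := Matrix.of fun a b =>
    ∑ f : Fin n → A, (if f i = a then 1 else 0) * X f (Function.update f i b)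
  map_add' X Y := by
    ext a b
    simp [Matrix.add_apply, mul_add, Finset.sum_add_distrib]
  map_smul' c X := by
    ext a b
    simp [Matrix.smul_apply, smul_eq_mul, Finset.mul_sum, mul_left_comm]

/-- The marginal operation on the `i`-th copy of the source induced by a channel `F` on `n`
copies, with the source state `ρ` in the remaining slots. -/
def marginal {A : Type*} [Fintype A] [DecidableEq A] (ρ : Matrix A A ℂ) {n : ℕ} (i : Fin n)
    (F : Matrix (Fin n → A) (Fin n → A) ℂ →ₗ[ℂ] Matrix (Fin n → A) (Fin n → A) ℂ) :
    Matrix A A ℂ →ₗ[ℂ] Matrix A A ℂ :=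
  ptraceExceptL i ∘ₗ F ∘ₗ insertAt ρ i

/-- Average (entanglement-fidelity) distortion of a channel `F` on `n` copies of the source. -/
def avgDistortion {R A : Type*} [Fintype R] [Fintype A] [DecidableEq A]
    (ρ : Matrix A A ℂ) (ψ : R × A → ℂ) {n : ℕ}
    (F : Matrix (Fin n → A) (Fin n → A) ℂ →ₗ[ℂ] Matrix (Fin n → A) (Fin n → A) ℂ) : ℝ :=
  (1 / n) * ∑ i, distortion ψ (marginal ρ i F)

/-- The dimension `⌈2^{nR}⌉`. -/
def cdim (n : ℕ) (Rr : ℝ) : ℕ := ⌈(2 : ℝ) ^ ((n : ℝ) * Rr)⌉₊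

/-- Tensoring with a fixed matrix on the right, as a linear map. -/
def kronRightL {A T : Type*} (Φ : Matrix T T ℂ) :
    Matrix A A ℂ →ₗ[ℂ] Matrix (A × T) (A × T) ℂ where
  toFun σ := Matrix.of fun p q => σ p.1 q.1 * Φ p.2 q.2
  map_add' X Y := by ext p q; simp [Matrix.add_apply, add_mul]
  map_smul' c X := by ext p q; simp [Matrix.smul_apply, smul_eq_mul, mul_assoc]

/-- The overall induced channel of an entanglement-assisted protocol: tensor in the shared
entangled state `Φ`, encode (acting on the source systems and `T_A`), send the result through
the channel `Nc`, and decode (acting on the channel output and `T_B`). -/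
def eaInduced {X Y A' B' tA tB : Type*}
    (Φ : Matrix (tA × tB) (tA × tB) ℂ)
    (E : Matrix (X × tA) (X × tA) ℂ →ₗ[ℂ] Matrix A' A' ℂ)
    (Dm : Matrix (B' × tB) (B' × tB) ℂ →ₗ[ℂ] Matrix Y Y ℂ)
    (Nc : Matrix A' A' ℂ →ₗ[ℂ] Matrix B' B' ℂ) :
    Matrix X X ℂ →ₗ[ℂ] Matrix Y Y ℂ :=
  Dm ∘ₗ rTensor tB Nc ∘ₗ rTensor tB E ∘ₗ
    (Matrix.reindexLinearEquiv ℂ ℂ (Equiv.prodAssoc X tA tB).symm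
      (Equiv.prodAssoc X tA tB).symm).toLinearMap ∘ₗ
    kronRightL Φ

/-- The equivalence `(Fin (n+1) → β) ≃ β × (Fin n → β)` (removed from Mathlib; old definition). -/
def _root_.Equiv.piFinSucc (n : ℕ) (β : Type*) : (Fin (n + 1) → β) ≃ β × (Fin n → β) :=
  (Fin.insertNthEquiv (fun _ => β) 0).symm

/-- Tensor power of a channel. -/
def chanPow {A B : Type*} (N : Matrix A A ℂ →ₗ[ℂ] Matrix B B ℂ) :
    (n : ℕ) → (Matrix (Fin n → A) (Fin n → A) ℂ →ₗ[ℂ] Matrix (Fin n → B) (Fin n → B) ℂ)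
  | 0 =>
    { toFun := fun X => Matrix.of fun _ _ => X (fun j => j.elim0) (fun j => j.elim0)
      map_add' := fun _ _ => rfl
      map_smul' := fun _ _ => rfl }
  | (n + 1) =>
    (Matrix.reindexLinearEquiv ℂ ℂ (Equiv.piFinSucc n B).symm
        (Equiv.piFinSucc n B).symm).toLinearMap
      ∘ₗ lTensor B (chanPow N n)
      ∘ₗ rTensor (Fin n → A) N
      ∘ₗ (Matrix.reindexLinearEquiv ℂ ℂ (Equiv.piFinSucc n A)
        (Equiv.piFinSucc n A)).toLinearMap

/-- The square root of a positive semidefinite matrix (removed from Mathlib; old definition). -/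
def _root_.Matrix.PosSemidef.sqrt {n 𝕜 : Type*} [Fintype n] [DecidableEq n] [RCLike 𝕜]
    {A : Matrix n n 𝕜} (hA : A.PosSemidef) : Matrix n n 𝕜 :=
  (hA.1.eigenvectorUnitary : Matrix n n 𝕜) * diagonal ((↑) ∘ Real.sqrt ∘ hA.1.eigenvalues) *
    (star hA.1.eigenvectorUnitary : Matrix n n 𝕜)

/-- The trace norm `‖X‖₁ = Tr √(X†X)`. -/
def traceNorm {A : Type*} [Fintype A] [DecidableEq A] (X : Matrix A A ℂ) : ℝ :=
  ((Matrix.posSemidef_conjTranspose_mul_self X).sqrt.trace).re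

/-- The sum of the negative eigenvalues of a Hermitian matrix. -/
def negPart {A : Type*} [Fintype A] [DecidableEq A] (X : Matrix A A ℂ) : ℝ :=
  if h : X.IsHermitian then ∑ i, min (h.eigenvalues i) 0 else 0

/-- The entanglement of purification of a bipartite state `ω` on `X ⊗ Y`:  take the canonical
purification to an environment `E ≅ X ⊗ Y`, discard `X`, and minimize the output entropy over
channels acting on `E` (with outputs of arbitrary finite dimension). -/
def Ep {X Y : Type*} [Fintype X] [Fintype Y] [DecidableEq X] [DecidableEq Y]
    (ω : Matrix (X × Y) (X × Y) ℂ) : ℝ :=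
  if hω : ω.PosSemidef then
    sInf { x | ∃ (e : ℕ) (Λ : Matrix (X × Y) (X × Y) ℂ →ₗ[ℂ] Matrix (Fin e) (Fin e) ℂ),
      IsCPTP Λ ∧
      x = entropy (lTensor Y Λ (ptraceLeft
        (Matrix.reindex (Equiv.prodAssoc X Y (X × Y)) (Equiv.prodAssoc X Y (X × Y))
          (proj (fun p => hω.sqrt p.1 p.2))))) }
  else 0

/-- Shannon entropy (base 2) of a distribution. -/
def shannonEntropy {U : Type*} [Fintype U] (p : U → ℝ) : ℝ :=
  -∑ u, p u * Real.logb 2 (p u)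

/-- Classical mutual information (base 2) of a joint distribution. -/
def classicalMI {U V : Type*} [Fintype U] [Fintype V] (j : U → V → ℝ) : ℝ :=
  ∑ u, ∑ v, j u v * Real.logb 2 (j u v / ((∑ v', j u v') * (∑ u', j u' v)))

/-- Shannon's rate-distortion function of a source `p` w.r.t. a distortion measure `dmeas`. -/
def classicalRD {U V : Type*} [Fintype U] [Fintype V]
    (p : U → ℝ) (dmeas : U → V → ℝ) (D : ℝ) : ℝ :=
  sInf { x | ∃ q : U → V → ℝ, (∀ u v, 0 ≤ q u v) ∧ (∀ u, ∑ v, q u v = 1) ∧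
    (∑ u, ∑ v, p u * q u v * dmeas u v) ≤ D ∧
    x = classicalMI (fun u v => p u * q u v) }

/-- The Holevo capacity `χ*(N)` of a quantum channel. -/
def holevoCap {A B : Type*} [Fintype A] [Fintype B] [DecidableEq B]
    (N : Matrix A A ℂ →ₗ[ℂ] Matrix B B ℂ) : ℝ :=
  sSup { x | ∃ (m : ℕ) (q : Fin m → ℝ) (σ : Fin m → Matrix A A ℂ),
    IsProbDist q ∧ (∀ i, IsState (σ i)) ∧
    x = mutualInfo (Matrix.of fun p p' : Fin m × B =>
      if p.1 = p'.1 then ((q p.1 : ℂ)) * N (σ p.1) p.2 p'.2 else 0) }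

/-- The coherent information `Q(N)` of a quantum channel (maximized over pure inputs). -/
def cohInfoCap {A B : Type*} [Fintype A] [Fintype B] [DecidableEq A] [DecidableEq B]
    (N : Matrix A A ℂ →ₗ[ℂ] Matrix B B ℂ) : ℝ :=
  sSup { x | ∃ φ : A × A → ℂ, IsUnitVec φ ∧ x = cohInfo (lTensor A N (proj φ)) }

/-- The mutual information `I(N)` of a quantum channel (maximized over pure inputs). -/
def miCap {A B : Type*} [Fintype A] [Fintype B] [DecidableEq A] [DecidableEq B]
    (N : Matrix A A ℂ →ₗ[ℂ] Matrix B B ℂ) : ℝ :=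
  sSup { x | ∃ φ : A × A → ℂ, IsUnitVec φ ∧ x = mutualInfo (lTensor A N (proj φ)) }


/-- `F` is the overall induced map of an `(n, Rr)` entanglement-assisted rate-distortion code
with *classical* communication: the message register has dimension `⌈2^{nR}⌉` and the encoder
output is classical (diagonal in a fixed basis). -/
def IsEACCodeMap {A : Type*} [Fintype A] [DecidableEq A] (Rr : ℝ) (n : ℕ)
    (F : Matrix (Fin n → A) (Fin n → A) ℂ →ₗ[ℂ] Matrix (Fin n → A) (Fin n → A) ℂ) : Prop :=
  ∃ (tA tB : ℕ) (φ : (Fin tA × Fin tB) → ℂ)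
    (E : Matrix ((Fin n → A) × Fin tA) ((Fin n → A) × Fin tA) ℂ →ₗ[ℂ]
      Matrix (Fin (cdim n Rr)) (Fin (cdim n Rr)) ℂ)
    (Dm : Matrix (Fin (cdim n Rr) × Fin tB) (Fin (cdim n Rr) × Fin tB) ℂ →ₗ[ℂ]
      Matrix (Fin n → A) (Fin n → A) ℂ),
    IsUnitVec φ ∧ IsCPTP E ∧ IsCPTP Dm ∧
    (∀ X w w', w ≠ w' → E X w w' = 0) ∧
    F = eaInduced (proj φ) E Dm LinearMap.id

/-- `F` is the overall induced map of an `(n, Rr)` entanglement-assisted rate-distortion code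
with *quantum* communication: the transmitted register has dimension `⌈2^{nR}⌉`. -/
def IsEAQCodeMap {A : Type*} [Fintype A] [DecidableEq A] (Rr : ℝ) (n : ℕ)
    (F : Matrix (Fin n → A) (Fin n → A) ℂ →ₗ[ℂ] Matrix (Fin n → A) (Fin n → A) ℂ) : Prop :=
  ∃ (tA tB : ℕ) (φ : (Fin tA × Fin tB) → ℂ)
    (E : Matrix ((Fin n → A) × Fin tA) ((Fin n → A) × Fin tA) ℂ →ₗ[ℂ]
      Matrix (Fin (cdim n Rr)) (Fin (cdim n Rr)) ℂ)
    (Dm : Matrix (Fin (cdim n Rr) × Fin tB) (Fin (cdim n Rr) × Fin tB) ℂ →ₗ[ℂ]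
      Matrix (Fin n → A) (Fin n → A) ℂ),
    IsUnitVec φ ∧ IsCPTP E ∧ IsCPTP Dm ∧
    F = eaInduced (proj φ) E Dm LinearMap.id

/-- `F` is the overall induced map of an `(n, Rr)` unassisted quantum rate-distortion code:
compression to a register of dimension `⌈2^{nR}⌉` followed by decompression. -/
def IsQCodeMap {A : Type*} [Fintype A] [DecidableEq A] (Rr : ℝ) (n : ℕ)
    (F : Matrix (Fin n → A) (Fin n → A) ℂ →ₗ[ℂ] Matrix (Fin n → A) (Fin n → A) ℂ) : Prop :=
  ∃ (E : Matrix (Fin n → A) (Fin n → A) ℂ →ₗ[ℂ]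
      Matrix (Fin (cdim n Rr)) (Fin (cdim n Rr)) ℂ)
    (Dm : Matrix (Fin (cdim n Rr)) (Fin (cdim n Rr)) ℂ →ₗ[ℂ]
      Matrix (Fin n → A) (Fin n → A) ℂ),
    IsCPTP E ∧ IsCPTP Dm ∧ F = Dm ∘ₗ E

/-- `(Rr, D)` is an achievable entanglement-assisted classical rate-distortion pair. -/
def eacAchievable {R A : Type*} [Fintype R] [Fintype A] [DecidableEq A]
    (ρ : Matrix A A ℂ) (ψ : R × A → ℂ) (Rr D : ℝ) : Prop :=
  ∃ F : (n : ℕ) → (Matrix (Fin n → A) (Fin n → A) ℂ →ₗ[ℂ] Matrix (Fin n → A) (Fin n → A) ℂ),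
    (∀ n, IsEACCodeMap Rr n (F n)) ∧
    Filter.limsup (fun n => avgDistortion ρ ψ (F n)) Filter.atTop ≤ D

/-- `(Rr, D)` is an achievable entanglement-assisted quantum rate-distortion pair. -/
def eaqAchievable {R A : Type*} [Fintype R] [Fintype A] [DecidableEq A]
    (ρ : Matrix A A ℂ) (ψ : R × A → ℂ) (Rr D : ℝ) : Prop :=
  ∃ F : (n : ℕ) → (Matrix (Fin n → A) (Fin n → A) ℂ →ₗ[ℂ] Matrix (Fin n → A) (Fin n → A) ℂ),
    (∀ n, IsEAQCodeMap Rr n (F n)) ∧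
    Filter.limsup (fun n => avgDistortion ρ ψ (F n)) Filter.atTop ≤ D

/-- `(Rr, D)` is an achievable unassisted quantum rate-distortion pair. -/
def qAchievable {R A : Type*} [Fintype R] [Fintype A] [DecidableEq A]
    (ρ : Matrix A A ℂ) (ψ : R × A → ℂ) (Rr D : ℝ) : Prop :=
  ∃ F : (n : ℕ) → (Matrix (Fin n → A) (Fin n → A) ℂ →ₗ[ℂ] Matrix (Fin n → A) (Fin n → A) ℂ),
    (∀ n, IsQCodeMap Rr n (F n)) ∧
    Filter.limsup (fun n => avgDistortion ρ ψ (F n)) Filter.atTop ≤ D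

/-- The entanglement-assisted classical rate-distortion function. -/
def Reac {R A : Type*} [Fintype R] [Fintype A] [DecidableEq A]
    (ρ : Matrix A A ℂ) (ψ : R × A → ℂ) (D : ℝ) : ℝ :=
  sInf { Rr | eacAchievable ρ ψ Rr D }

/-- The entanglement-assisted quantum rate-distortion function. -/
def Reaq {R A : Type*} [Fintype R] [Fintype A] [DecidableEq A]
    (ρ : Matrix A A ℂ) (ψ : R × A → ℂ) (D : ℝ) : ℝ :=
  sInf { Rr | eaqAchievable ρ ψ Rr D }

/-- The unassisted quantum rate-distortion function. -/
def Rq {R A : Type*} [Fintype R] [Fintype A] [DecidableEq A]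
    (ρ : Matrix A A ℂ) (ψ : R × A → ℂ) (D : ℝ) : ℝ :=
  sInf { Rr | qAchievable ρ ψ Rr D }

/-- The information rate-distortion function:  minimal input-output mutual information over all
channels meeting the distortion constraint. -/
def infoRD {R A : Type*} [Fintype R] [Fintype A] [DecidableEq R] [DecidableEq A]
    (ψ : R × A → ℂ) (D : ℝ) : ℝ :=
  sInf { x | ∃ N : Matrix A A ℂ →ₗ[ℂ] Matrix A A ℂ,
    IsCPTP N ∧ distortion ψ N ≤ D ∧ x = mutualInfo (lTensor R N (proj ψ)) }


/-- A memoryless classical source `p` can be reliably transmitted over the quantum channel `N`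
(one channel use per source output): for every `ε > 0` and all sufficiently large `n` there is
a scheme (encoding source sequences into channel-input states, decoding by a POVM indexed by
source sequences) whose error probability is at most `ε`. -/
def ReliablyTransmits {U A B : Type*} [Fintype U] [Fintype A] [Fintype B]
    (p : U → ℝ) (N : Matrix A A ℂ →ₗ[ℂ] Matrix B B ℂ) : Prop :=
  ∀ ε : ℝ, 0 < ε → ∀ᶠ n in Filter.atTop,
    ∃ (enc : (Fin n → U) → Matrix (Fin n → A) (Fin n → A) ℂ)
      (dec : (Fin n → U) → Matrix (Fin n → B) (Fin n → B) ℂ),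
      (∀ u, IsState (enc u)) ∧ (∀ u, (dec u).PosSemidef) ∧ (∑ u, dec u = 1) ∧
      (∑ u : Fin n → U, (∏ i, p (u i)) *
        (1 - ((dec u * chanPow N n (enc u)).trace).re)) ≤ ε

/-- A memoryless classical source `p` can be transmitted over the quantum channel `N` up to
average distortion `D` w.r.t. the distortion measure `dmeas` (one channel use per source
output). -/
def TransmitsWithDistortion {U V A B : Type*} [Fintype U] [Fintype V] [Fintype A] [Fintype B]
    (p : U → ℝ) (dmeas : U → V → ℝ) (N : Matrix A A ℂ →ₗ[ℂ] Matrix B B ℂ) (D : ℝ) : Prop :=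
  ∀ ε : ℝ, 0 < ε → ∀ᶠ n in Filter.atTop,
    ∃ (enc : (Fin n → U) → Matrix (Fin n → A) (Fin n → A) ℂ)
      (dec : (Fin n → V) → Matrix (Fin n → B) (Fin n → B) ℂ),
      (∀ u, IsState (enc u)) ∧ (∀ v, (dec v).PosSemidef) ∧ (∑ v, dec v = 1) ∧
      (∑ u : Fin n → U, ∑ v : Fin n → V, (∏ i, p (u i)) *
        (((dec v * chanPow N n (enc u)).trace).re * ((1 / n) * ∑ i, dmeas (u i) (v i)))) ≤
        D + ε

/-- A memoryless quantum source (with purification `ψ`) can be faithfully transmitted over the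
quantum channel `N` (one channel use per source output, trace-norm error at most `ε`). -/
def FaithfullyTransmits {R A A' B : Type*} [Fintype R] [Fintype A] [Fintype A'] [Fintype B]
    [DecidableEq R] [DecidableEq A]
    (ψ : R × A → ℂ) (N : Matrix A' A' ℂ →ₗ[ℂ] Matrix B B ℂ) : Prop :=
  ∀ ε : ℝ, 0 < ε → ∀ᶠ n in Filter.atTop,
    ∃ (E : Matrix (Fin n → A) (Fin n → A) ℂ →ₗ[ℂ] Matrix (Fin n → A') (Fin n → A') ℂ)
      (Dm : Matrix (Fin n → B) (Fin n → B) ℂ →ₗ[ℂ] Matrix (Fin n → A) (Fin n → A) ℂ),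
      IsCPTP E ∧ IsCPTP Dm ∧
      traceNorm (proj (vecPow ψ n) -
        lTensor (Fin n → R) (Dm ∘ₗ chanPow N n ∘ₗ E) (proj (vecPow ψ n))) ≤ ε

/-- A memoryless quantum source (with purification `ψ`) can be faithfully transmitted over the
quantum channel `N` with the help of unlimited prior shared entanglement. -/
def EAFaithfullyTransmits {R A A' B : Type*} [Fintype R] [Fintype A] [Fintype A'] [Fintype B]
    [DecidableEq R] [DecidableEq A]
    (ψ : R × A → ℂ) (N : Matrix A' A' ℂ →ₗ[ℂ] Matrix B B ℂ) : Prop :=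
  ∀ ε : ℝ, 0 < ε → ∀ᶠ n in Filter.atTop,
    ∃ (tA tB : ℕ) (φ : (Fin tA × Fin tB) → ℂ)
      (E : Matrix ((Fin n → A) × Fin tA) ((Fin n → A) × Fin tA) ℂ →ₗ[ℂ]
        Matrix (Fin n → A') (Fin n → A') ℂ)
      (Dm : Matrix ((Fin n → B) × Fin tB) ((Fin n → B) × Fin tB) ℂ →ₗ[ℂ]
        Matrix (Fin n → A) (Fin n → A) ℂ),
      IsUnitVec φ ∧ IsCPTP E ∧ IsCPTP Dm ∧
      traceNorm (proj (vecPow ψ n) -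
        lTensor (Fin n → R) (eaInduced (proj φ) E Dm (chanPow N n)) (proj (vecPow ψ n))) ≤ ε

/-- A memoryless quantum source can be transmitted over the quantum channel `N`, with unlimited
prior shared entanglement, up to average entanglement-fidelity distortion `D`. -/
def EATransmitsWithDistortion {R A : Type*} [Fintype R] [Fintype A]
    [DecidableEq R] [DecidableEq A] {A' B : Type*} [Fintype A'] [Fintype B]
    (ρ : Matrix A A ℂ) (ψ : R × A → ℂ) (N : Matrix A' A' ℂ →ₗ[ℂ] Matrix B B ℂ) (D : ℝ) :
    Prop :=
  ∀ ε : ℝ, 0 < ε → ∀ᶠ n in Filter.atTop,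
    ∃ (tA tB : ℕ) (φ : (Fin tA × Fin tB) → ℂ)
      (E : Matrix ((Fin n → A) × Fin tA) ((Fin n → A) × Fin tA) ℂ →ₗ[ℂ]
        Matrix (Fin n → A') (Fin n → A') ℂ)
      (Dm : Matrix ((Fin n → B) × Fin tB) ((Fin n → B) × Fin tB) ℂ →ₗ[ℂ]
        Matrix (Fin n → A) (Fin n → A) ℂ),
      IsUnitVec φ ∧ IsCPTP E ∧ IsCPTP Dm ∧
      avgDistortion ρ ψ (eaInduced (proj φ) E Dm (chanPow N n)) ≤ D + ε


/-- The completely depolarizing qubit channel `X ↦ Tr[X]·I/2`. -/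
def depol : Matrix (Fin 2) (Fin 2) ℂ →ₗ[ℂ] Matrix (Fin 2) (Fin 2) ℂ where
  toFun X := X.trace • ((1 / 2 : ℂ) • (1 : Matrix (Fin 2) (Fin 2) ℂ))
  map_add' X Y := by simp [Matrix.trace_add, add_smul]
  map_smul' c X := by simp [Matrix.trace_smul, smul_smul, mul_assoc]

/-- The Bell state `(|00⟩ + |11⟩)/√2`. -/
def bell : Fin 2 × Fin 2 → ℂ := fun p => if p.1 = p.2 then (Real.sqrt 2 : ℂ)⁻¹ else 0

/-!
`(id ⊗ Λ)(X) = Tr_A X ⊗ I/2` is a Kronecker product of positive matrices whenever `X ≥ 0`, so `Λ`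
is a channel, and on the Bell state it outputs `I/2 ⊗ I/2 = I/4`. The entropy of a maximally
mixed state is `log₂` of its dimension, giving `I(A⟩B) = 1 - 2 = -1` and fidelity `1/4`.
Since `sInf` of a set of reals unbounded below is `0`, the bound on the infimum also needs the
coherent information of states to be bounded below: entropies of `d`-dimensional states lie in
`[0, d / ln 2]`, by `-x ln x ≤ 1 - x`.
-/

open scoped Kronecker

section Entropy

variable {n : Type*} [Fintype n] [DecidableEq n]

lemma entropy_eq_sum_negMulLog {ρ : Matrix n n ℂ} (hρ : ρ.IsHermitian) :
    entropy ρ = (∑ i, Real.negMulLog (hρ.eigenvalues i)) / Real.log 2 := by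
  simp only [entropy, dif_pos hρ, Real.negMulLog, Real.logb, Finset.sum_div]
  rw [← Finset.sum_neg_distrib]
  exact Finset.sum_congr rfl fun i _ => by ring

lemma eigenvalues_real_smul_one (r : ℝ) (h : ((r : ℂ) • (1 : Matrix n n ℂ)).IsHermitian)
    (i : n) : h.eigenvalues i = r := by
  have H := h.eigenvalues_eq i
  rw [Matrix.smul_mulVec, Matrix.one_mulVec, dotProduct_smul, dotProduct_comm,
    ← EuclideanSpace.inner_eq_star_dotProduct] at H
  simpa [h.eigenvectorBasis.orthonormal.1 i] using H

lemma entropy_inv_card_smul_one :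
    entropy ((((Fintype.card n : ℝ)⁻¹ : ℝ) : ℂ) • (1 : Matrix n n ℂ)) =
      Real.logb 2 (Fintype.card n) := by
  have hherm : ((((Fintype.card n : ℝ)⁻¹ : ℝ) : ℂ) • (1 : Matrix n n ℂ)).IsHermitian := by
    simp [Matrix.IsHermitian, Matrix.conjTranspose_smul]
  rw [entropy, dif_pos hherm]
  simp only [eigenvalues_real_smul_one _ hherm, Finset.sum_const, Finset.card_univ, nsmul_eq_mul,
    Real.logb_inv]
  rcases eq_or_ne (Fintype.card n : ℝ) 0 with hd | hd
  · simp [hd]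
  · field_simp

lemma entropy_nonneg {ρ : Matrix n n ℂ} (hρ : ρ.PosSemidef) (htr : ρ.trace = 1) :
    0 ≤ entropy ρ := by
  have hsum : ∑ i, hρ.1.eigenvalues i = 1 := by
    have h := hρ.1.trace_eq_sum_eigenvalues
    rw [htr] at h
    simpa using (congrArg Complex.re h).symm
  have hle : ∀ i, hρ.1.eigenvalues i ≤ 1 := fun i =>
    hsum ▸ Finset.single_le_sum (fun j _ => hρ.eigenvalues_nonneg j) (Finset.mem_univ i)
  rw [entropy_eq_sum_negMulLog hρ.1]
  exact div_nonneg (Finset.sum_nonneg fun i _ =>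
    Real.negMulLog_nonneg (hρ.eigenvalues_nonneg i) (hle i)) (Real.log_nonneg one_le_two)

lemma entropy_le_card_div_log_two {ρ : Matrix n n ℂ} (hρ : ρ.PosSemidef) :
    entropy ρ ≤ Fintype.card n / Real.log 2 := by
  rw [entropy_eq_sum_negMulLog hρ.1]
  gcongr
  calc ∑ i, Real.negMulLog (hρ.1.eigenvalues i) ≤ ∑ _i : n, (1 : ℝ) :=
        Finset.sum_le_sum fun i _ => (Real.negMulLog_le_one_sub_self
          (hρ.eigenvalues_nonneg i)).trans (by linarith [hρ.eigenvalues_nonneg i])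
    _ = Fintype.card n := by simp

end Entropy

section PartialTrace

variable {R A : Type*}

lemma ptraceLeft_eq_sum_submatrix [Fintype R] (X : Matrix (R × A) (R × A) ℂ) :
    ptraceLeft X = ∑ r, X.submatrix (Prod.mk r) (Prod.mk r) := by
  ext i j
  simp [ptraceLeft, Matrix.sum_apply]

lemma ptraceRight_eq_sum_submatrix [Fintype A] (X : Matrix (R × A) (R × A) ℂ) :
    ptraceRight X = ∑ a, X.submatrix (fun r => (r, a)) (fun r => (r, a)) := by
  ext i j
  simp [ptraceRight, Matrix.sum_apply]

lemma posSemidef_ptraceLeft [Fintype R] {X : Matrix (R × A) (R × A) ℂ} (hX : X.PosSemidef) :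
    (ptraceLeft X).PosSemidef := by
  rw [ptraceLeft_eq_sum_submatrix]
  exact Matrix.posSemidef_sum _ fun r _ => hX.submatrix _

lemma posSemidef_ptraceRight [Fintype A] {X : Matrix (R × A) (R × A) ℂ} (hX : X.PosSemidef) :
    (ptraceRight X).PosSemidef := by
  rw [ptraceRight_eq_sum_submatrix]
  exact Matrix.posSemidef_sum _ fun a _ => hX.submatrix _

lemma trace_ptraceLeft [Fintype R] [Fintype A] (X : Matrix (R × A) (R × A) ℂ) :
    (ptraceLeft X).trace = X.trace := by
  simp only [ptraceLeft, Matrix.trace, Matrix.diag, Matrix.of_apply, Fintype.sum_prod_type]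
  exact Finset.sum_comm

lemma trace_lTensor [Fintype R] [Fintype A] {B : Type*} [Fintype B]
    {N : Matrix A A ℂ →ₗ[ℂ] Matrix B B ℂ}
    (hN : ∀ X, (N X).trace = X.trace) (X : Matrix (R × A) (R × A) ℂ) :
    (lTensor R N X).trace = X.trace := by
  simp only [Matrix.trace, Matrix.diag, Fintype.sum_prod_type, lTensor, LinearMap.coe_mk,
    AddHom.coe_mk, Matrix.of_apply]
  exact Finset.sum_congr rfl fun r _ => by simpa [Matrix.trace, blockL] using hN (blockL r r X)

lemma ptraceLeft_smul_one [Fintype R] [DecidableEq R] [DecidableEq A] (c : ℂ) :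
    ptraceLeft (c • (1 : Matrix (R × A) (R × A) ℂ)) = ((Fintype.card R : ℂ) * c) • 1 := by
  ext i j
  by_cases h : i = j <;> simp [ptraceLeft, Matrix.one_apply, h]

end PartialTrace

lemma IsCPTP.isState_lTensor {A B : Type*} [Fintype A] [Fintype B]
    {N : Matrix A A ℂ →ₗ[ℂ] Matrix B B ℂ} (hN : IsCPTP N) {k : ℕ}
    {ρ : Matrix (Fin k × A) (Fin k × A) ℂ} (hρ : IsState ρ) : IsState (lTensor (Fin k) N ρ) :=
  ⟨hN.2 k ρ hρ.1, (trace_lTensor hN.1 ρ).trans hρ.2⟩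

lemma neg_card_div_log_two_le_cohInfo {X Y : Type*} [Fintype X] [Fintype Y] [DecidableEq X]
    [DecidableEq Y] {ω : Matrix (X × Y) (X × Y) ℂ} (hω : IsState ω) :
    -(Fintype.card (X × Y) / Real.log 2) ≤ cohInfo ω := by
  have hB := entropy_nonneg (posSemidef_ptraceLeft hω.1) ((trace_ptraceLeft ω).trans hω.2)
  have hAB := entropy_le_card_div_log_two hω.1
  rw [cohInfo]
  linarith

lemma isState_proj {A : Type*} [Fintype A] {ψ : A → ℂ} (hψ : IsUnitVec ψ) : IsState (proj ψ) := by
  refine ⟨Matrix.posSemidef_vecMulVec_self_star ψ, ?_⟩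
  simp only [proj, Matrix.trace, Matrix.diag, Matrix.of_apply, Complex.mul_conj]
  exact_mod_cast hψ

lemma quadForm_real_smul_one {A : Type*} [Fintype A] [DecidableEq A] (c : ℝ) {ψ : A → ℂ}
    (hψ : IsUnitVec ψ) : quadForm ψ ((c : ℂ) • (1 : Matrix A A ℂ)) = c := by
  have hdiag : ∀ p, ∑ q, (starRingEnd ℂ) (ψ p) * ((c : ℂ) • (1 : Matrix A A ℂ)) p q * ψ q =
      c * Complex.normSq (ψ p) := fun p => by
    simp only [Matrix.smul_apply, Matrix.one_apply, smul_eq_mul, mul_ite, mul_one, mul_zero,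
      ite_mul, zero_mul, Finset.sum_ite_eq, Finset.mem_univ, if_true]
    rw [← Complex.mul_conj]
    ring
  simp only [quadForm, hdiag, ← Finset.mul_sum]
  norm_cast
  rw [show ∑ p, Complex.normSq (ψ p) = 1 from hψ, mul_one]

section Depolarizing

lemma trace_depol (X : Matrix (Fin 2) (Fin 2) ℂ) : (depol X).trace = X.trace := by
  simp [depol, Matrix.trace_smul]

lemma lTensor_depol {R : Type*} [Fintype R] (X : Matrix (R × Fin 2) (R × Fin 2) ℂ) :
    lTensor R depol X = ptraceRight X ⊗ₖ ((1 / 2 : ℂ) • 1) := by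
  ext p q
  simp [lTensor, depol, blockL, ptraceRight, Matrix.trace, Matrix.kroneckerMap_apply]

lemma isCPTP_depol : IsCPTP depol := by
  refine ⟨trace_depol, fun k X hX => ?_⟩
  rw [lTensor_depol]
  exact (posSemidef_ptraceRight hX).kronecker (Matrix.PosSemidef.one.smul (by positivity))

end Depolarizing

section Bell

lemma proj_bell_apply (p q : Fin 2 × Fin 2) :
    proj bell p q = if p.1 = p.2 ∧ q.1 = q.2 then 1 / 2 else 0 := by
  have hsq : ((Real.sqrt 2 : ℂ))⁻¹ * ((Real.sqrt 2 : ℂ))⁻¹ = 2⁻¹ := by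
    rw [← mul_inv, ← Complex.ofReal_mul, Real.mul_self_sqrt zero_le_two]
    norm_num
  by_cases hp : p.1 = p.2 <;> by_cases hq : q.1 = q.2 <;> simp [proj, bell, hp, hq, hsq]

lemma isUnitVec_bell : IsUnitVec bell := by
  have : Complex.normSq ((Real.sqrt 2 : ℂ))⁻¹ = 1 / 2 := by
    rw [map_inv₀, Complex.normSq_ofReal, Real.mul_self_sqrt zero_le_two]
    norm_num
  simp [IsUnitVec, bell, Fintype.sum_prod_type, this]
  norm_num

lemma ptraceLeft_proj_bell : ptraceLeft (proj bell) = (1 / 2 : ℂ) • 1 := by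
  ext i j
  fin_cases i <;> fin_cases j <;> simp [ptraceLeft, proj_bell_apply]

lemma ptraceRight_proj_bell : ptraceRight (proj bell) = (1 / 2 : ℂ) • 1 := by
  ext i j
  fin_cases i <;> fin_cases j <;> simp [ptraceRight, proj_bell_apply]

lemma lTensor_depol_proj_bell : lTensor (Fin 2) depol (proj bell) = (1 / 4 : ℂ) • 1 := by
  rw [lTensor_depol, ptraceRight_proj_bell, Matrix.smul_kronecker, Matrix.kronecker_smul,
    Matrix.one_kronecker_one, smul_smul]
  norm_num

lemma distortion_bell_depol : distortion bell depol = 3 / 4 := by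
  rw [distortion, entFid, lTensor_depol_proj_bell,
    show (1 / 4 : ℂ) = ((1 / 4 : ℝ) : ℂ) by norm_num, quadForm_real_smul_one _ isUnitVec_bell]
  norm_num

lemma cohInfo_lTensor_depol_proj_bell : cohInfo (lTensor (Fin 2) depol (proj bell)) = -1 := by
  have hB : (Fintype.card (Fin 2) : ℂ) * (1 / 4) = (((Fintype.card (Fin 2) : ℝ)⁻¹ : ℝ) : ℂ) := by
    norm_num
  have hAB : (1 / 4 : ℂ) = (((Fintype.card (Fin 2 × Fin 2) : ℝ)⁻¹ : ℝ) : ℂ) := by norm_num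
  rw [cohInfo, lTensor_depol_proj_bell, ptraceLeft_smul_one, hB, hAB, entropy_inv_card_smul_one,
    entropy_inv_card_smul_one, show ((Fintype.card (Fin 2 × Fin 2) : ℕ) : ℝ) = 2 ^ 2 by norm_num,
    Real.logb_pow, Fintype.card_fin, Nat.cast_ofNat, Real.logb_self_eq_one one_lt_two]
  norm_num

end Bell

/-- **Barnum's proposed coherent-information rate-distortion function can be negative:**  the
Bell state purifies the maximally mixed qubit state `π = I/2`; the completely depolarizing
channel `Λ` has output `(id ⊗ Λ)(|Φ⟩⟨Φ|) = I/4`, distortion `3/4`, and coherent information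
`−1`; hence the minimum of `I(A⟩B)` over channels with distortion at most `3/4` is at most
`−1 < 0`. -/
theorem barnum_conjecture_fails :
    IsPurification bell ((1 / 2 : ℂ) • (1 : Matrix (Fin 2) (Fin 2) ℂ)) ∧
    IsCPTP depol ∧
    lTensor (Fin 2) depol (proj bell) =
      (1 / 4 : ℂ) • (1 : Matrix (Fin 2 × Fin 2) (Fin 2 × Fin 2) ℂ) ∧
    distortion bell depol = 3 / 4 ∧
    cohInfo (lTensor (Fin 2) depol (proj bell)) = -1 ∧
    sInf { x | ∃ N : Matrix (Fin 2) (Fin 2) ℂ →ₗ[ℂ] Matrix (Fin 2) (Fin 2) ℂ,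
      IsCPTP N ∧ distortion bell N ≤ 3 / 4 ∧
      x = cohInfo (lTensor (Fin 2) N (proj bell)) } ≤ -1 ∧
    (-1 : ℝ) < 0 := by
  refine ⟨⟨isUnitVec_bell, ptraceLeft_proj_bell⟩, isCPTP_depol, lTensor_depol_proj_bell,
    distortion_bell_depol, cohInfo_lTensor_depol_proj_bell, csInf_le ?_ ?_, by norm_num⟩
  · refine ⟨-(Fintype.card (Fin 2 × Fin 2) / Real.log 2), ?_⟩
    rintro _ ⟨N, hN, -, rfl⟩
    exact neg_card_div_log_two_le_cohInfo (hN.isState_lTensor (isState_proj isUnitVec_bell))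
  · exact ⟨depol, isCPTP_depol, distortion_bell_depol.le, cohInfo_lTensor_depol_proj_bell.symm⟩

end QIT
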